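/- arXiv:2310.02027 — 2 statements merged into one kernel-verified Lean document; each statement's English description precedes it below -/
import Mathlib

section
/- Let κ < 0 and d₁, d₂ ∈ ℕ. For W ∈ ℝ^{d₂×d₁}, b₁, b₂ ∈ ℝ^{d₂}, and h ∈ ℝ^{d₁} with ‖h‖ < 1/√|κ|, define φ(h) = (2√|κ| · W h + b₁ (1 − κ‖h‖²)) / (√|κ| (1 + κ‖h‖²)) + b₂ and F(h) = φ(h) / (1 + √(|κ|‖φ(h)‖² + 1)). Then ‖F(h)‖ < 1/√|κ|; that is, F maps the d₁-dimensional Poincaré ball of curvature κ into the d₂-dimensional Poincaré ball of curvature κ. -/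
noncomputable section

/-- The Poincaré fully-connected layer `F` maps the `d₁`-dimensional Poincaré ball of
curvature `κ < 0` into the `d₂`-dimensional Poincaré ball of curvature `κ`. -/
theorem poincare_fc_layer_maps_ball_to_ball
    (κ : ℝ) (hκ : κ < 0) (d₁ d₂ : ℕ)
    (W : Matrix (Fin d₂) (Fin d₁) ℝ)
    (b₁ b₂ : EuclideanSpace ℝ (Fin d₂))
    (h : EuclideanSpace ℝ (Fin d₁))
    (hh : ‖h‖ < 1 / Real.sqrt |κ|)
    (φ : EuclideanSpace ℝ (Fin d₂))
    (hφ : φ = (Real.sqrt |κ| * (1 + κ * ‖h‖ ^ 2))⁻¹ •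
        ((2 * Real.sqrt |κ|) •
            (WithLp.equiv 2 (Fin d₂ → ℝ)).symm (W.mulVec ((WithLp.equiv 2 (Fin d₁ → ℝ)) h)) +
          (1 - κ * ‖h‖ ^ 2) • b₁) + b₂)
    (F : EuclideanSpace ℝ (Fin d₂))
    (hF : F = (1 + Real.sqrt (|κ| * ‖φ‖ ^ 2 + 1))⁻¹ • φ) :
    ‖F‖ < 1 / Real.sqrt |κ| := by
  have hk : (0:ℝ) < |κ| := abs_pos.mpr (ne_of_lt hκ)
  have hs : 0 < Real.sqrt |κ| := Real.sqrt_pos.mpr hk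
  set a := ‖φ‖ with ha
  have ha0 : 0 ≤ a := norm_nonneg _
  have hr0 : 0 ≤ |κ| * a ^ 2 + 1 := by positivity
  have hD : 0 < 1 + Real.sqrt (|κ| * a ^ 2 + 1) := by positivity
  have hFnorm : ‖F‖ = (1 + Real.sqrt (|κ| * a ^ 2 + 1))⁻¹ * a := by
    rw [hF, norm_smul, Real.norm_eq_abs, abs_inv, abs_of_pos hD]
  rw [hFnorm]
  rw [inv_mul_lt_iff₀ hD, mul_one_div, lt_div_iff₀ hs, mul_comm]
  have key : Real.sqrt |κ| * a ≤ Real.sqrt (|κ| * a ^ 2 + 1) := by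
    have : Real.sqrt |κ| * a = Real.sqrt (|κ| * a ^ 2) := by
      rw [Real.sqrt_mul (le_of_lt hk), Real.sqrt_sq ha0]
    rw [this]
    exact Real.sqrt_le_sqrt (by linarith)
  linarith
end
end

section
/- Let κ < 0, d₁, d₂ ∈ ℕ, x ∈ ℝ^{d₁} with ‖x‖ < 1/√|κ|, W ∈ ℝ^{d₂×(d₁+1)}, and b ∈ ℝ^{d₂}. Let x̂ = P_{𝔻→𝕃}(x) ∈ ℝ^{d₁+1} and φ = W x̂ + b ∈ ℝ^{d₂}. Then P_{𝕃→𝔻}( (√(‖φ‖² − 1/κ), φ) ) = φ / (1 + √(|κ|‖φ‖² + 1)). That is, the three-step pipeline (project the Poincaré point to the hyperboloid, apply the affine map with Lorentzian time re-normalization, project back to the ball) equals the closed-form layer of Theorem 1. -/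
noncomputable section

/-- The stereographic projection `P_{𝕃→𝔻}` from the hyperboloid to the Poincaré ball. -/
def projLD (κ : ℝ) {n : ℕ} (z : ℝ × EuclideanSpace ℝ (Fin n)) : EuclideanSpace ℝ (Fin n) :=
  (1 + Real.sqrt |κ| * z.1)⁻¹ • z.2

/-- The stereographic projection `P_{𝔻→𝕃}` from the Poincaré ball to the hyperboloid. -/
def projDL (κ : ℝ) {n : ℕ} (x : EuclideanSpace ℝ (Fin n)) : ℝ × EuclideanSpace ℝ (Fin n) :=
  ((1 - κ * ‖x‖ ^ 2) / (Real.sqrt |κ| + κ * Real.sqrt |κ| * ‖x‖ ^ 2),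
    (1 + κ * ‖x‖ ^ 2)⁻¹ • ((2 : ℝ) • x))

/-- The three-step pipeline (project the Poincaré point to the hyperboloid, apply the
affine map with Lorentzian time re-normalization, project back to the ball) equals the
closed-form Poincaré fully-connected layer `φ / (1 + √(|κ|‖φ‖² + 1))`. -/
theorem pipeline_eq_closed_form_layer
    (κ : ℝ) (hκ : κ < 0) (d₁ d₂ : ℕ)
    (x : EuclideanSpace ℝ (Fin d₁)) (hx : ‖x‖ < 1 / Real.sqrt |κ|)
    (W : Matrix (Fin d₂) (Fin (d₁ + 1)) ℝ) (b : EuclideanSpace ℝ (Fin d₂))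
    (xh : ℝ × EuclideanSpace ℝ (Fin d₁)) (hxh : xh = projDL κ x)
    (φ : EuclideanSpace ℝ (Fin d₂))
    (hφ : φ = (WithLp.equiv 2 (Fin d₂ → ℝ)).symm
        (W.mulVec (Fin.cons xh.1 ((WithLp.equiv 2 (Fin d₁ → ℝ)) xh.2))) + b) :
    projLD κ (Real.sqrt (‖φ‖ ^ 2 - 1 / κ), φ) =
      (1 + Real.sqrt (|κ| * ‖φ‖ ^ 2 + 1))⁻¹ • φ := by
  unfold projLD
  have h1 : Real.sqrt |κ| * Real.sqrt (‖φ‖ ^ 2 - 1 / κ) = Real.sqrt (|κ| * ‖φ‖ ^ 2 + 1) := by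
    rw [← Real.sqrt_mul (abs_nonneg κ)]
    congr 1
    rw [abs_of_neg hκ]
    rw [mul_sub, mul_one_div, neg_div, div_self (ne_of_lt hκ)]
    ring
  simp only [h1]
end
end
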